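/- arXiv:1603.08853 — 5 statements merged into one kernel-verified Lean document; each statement's English description precedes it below -/
import Mathlib

section
/- Under the assumptions α1a > α2 ≥ α1n > 0, b2 ≥ b1 ≥ 0, D > (b2 - b1)/α1n, and p ∈ (0,1), with K0 = α2·D - b1 + b2, ᾱ1 = (1-p)·α1n + p·α1a, K1 = K0/(ᾱ1+α2), K2 = K0/(α1a+α2), K3 = K0/(α1n+α2), define the thresholds μ1 = K1·(α1a - ᾱ1) / (D·(1-p)·(α1a + α2)), μ2 = (K1 - p·K2)/(D·(1-p)), and μ3 = K3/D. Then 0 < μ1 < μ2 < μ3 ≤ 1. -/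
/-!
Write `ᾱ1 + α2 = (1 - p)(α1n + α2) + p(α1a + α2)`. Then `μ2 = μ1 + K2 / D` is an algebraic
identity, and `μ2 < μ3` amounts to `K1 < (1 - p) K3 + p K2`, i.e. strict convexity of
`x ↦ K0 / x` on `(0, ∞)` at the two distinct points `α1n + α2 < α1a + α2`.
Finally `μ3 ≤ 1` is `b2 - b1 ≤ α1n D`.
-/

lemma div_convex_combination_lt {K x y p : ℝ} (hK : 0 < K) (hx : 0 < x) (hy : 0 < y) (hxy : x ≠ y)
    (hp0 : 0 < p) (hp1 : p < 1) :
    K / ((1 - p) * x + p * y) < (1 - p) * (K / x) + p * (K / y) := by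
  have hinv : ((1 - p) * x + p * y)⁻¹ < (1 - p) * x⁻¹ + p * y⁻¹ := by
    simpa only [zpow_neg_one, smul_eq_mul] using
      (strictConvexOn_zpow (m := -1) (by decide) (by decide)).2 hx hy hxy (sub_pos.2 hp1) hp0
        (by ring)
  calc K / ((1 - p) * x + p * y) = K * ((1 - p) * x + p * y)⁻¹ := div_eq_mul_inv _ _
    _ < K * ((1 - p) * x⁻¹ + p * y⁻¹) := mul_lt_mul_of_pos_left hinv hK
    _ = (1 - p) * (K / x) + p * (K / y) := by ring

lemma div_sub_mul_div_eq_add {K a m c D p : ℝ} (hm : m + c ≠ 0) (ha : a + c ≠ 0)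
    (hD : D ≠ 0) (hp : 1 - p ≠ 0) :
    (K / (m + c) - p * (K / (a + c))) / (D * (1 - p)) =
      K / (m + c) * (a - m) / (D * (1 - p) * (a + c)) + K / (a + c) / D := by
  field_simp
  ring

theorem stmt_1_general (α1n α1a α2 b1 b2 D p : ℝ)
    (h1 : α1a > α2) (h2 : α2 ≥ α1n) (h3 : α1n > 0)
    (h4 : b2 ≥ b1) (h6 : D > (b2 - b1) / α1n)
    (hp : p ∈ Set.Ioo (0:ℝ) 1)
    (ᾱ1 K0 K1 K2 K3 μ1 μ2 μ3 : ℝ)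
    (hK0 : K0 = α2 * D - b1 + b2)
    (hᾱ1 : ᾱ1 = (1 - p) * α1n + p * α1a)
    (hK1 : K1 = K0 / (ᾱ1 + α2))
    (hK2 : K2 = K0 / (α1a + α2))
    (hK3 : K3 = K0 / (α1n + α2))
    (hμ1 : μ1 = K1 * (α1a - ᾱ1) / (D * (1 - p) * (α1a + α2)))
    (hμ2 : μ2 = (K1 - p * K2) / (D * (1 - p)))
    (hμ3 : μ3 = K3 / D) :
    0 < μ1 ∧ μ1 < μ2 ∧ μ2 < μ3 ∧ μ3 ≤ 1 := by
  obtain ⟨hp0, hp1⟩ := hp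
  have hq : 0 < 1 - p := sub_pos.2 hp1
  have hα2 : 0 < α2 := h3.trans_le h2
  have hna : α1n < α1a := h2.trans_lt h1
  have hb : b2 - b1 < D * α1n := (div_lt_iff₀ h3).1 h6
  have hD : 0 < D := (div_nonneg (sub_nonneg.2 h4) h3.le).trans_lt h6
  have hK0pos : 0 < K0 := by rw [hK0]; linarith [mul_pos hα2 hD]
  have hmix : ᾱ1 + α2 = (1 - p) * (α1n + α2) + p * (α1a + α2) := by rw [hᾱ1]; ring
  have hᾱ1a : ᾱ1 < α1a := by rw [hᾱ1]; nlinarith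
  have ha : 0 < α1a + α2 := by linarith
  have hn : 0 < α1n + α2 := by linarith
  have hm : 0 < ᾱ1 + α2 := hmix ▸ add_pos (mul_pos hq hn) (mul_pos hp0 ha)
  have hμ2μ1 : μ2 = μ1 + K2 / D := by
    rw [hμ2, hμ1, hK1, hK2]
    exact div_sub_mul_div_eq_add hm.ne' ha.ne' hD.ne' hq.ne'
  have hK1conv : K1 < (1 - p) * K3 + p * K2 := by
    rw [hK1, hK2, hK3, hmix]
    exact div_convex_combination_lt hK0pos hn ha (by linarith) hp0 hp1
  refine ⟨?_, ?_, ?_, ?_⟩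
  · rw [hμ1, hK1]
    exact div_pos (mul_pos (div_pos hK0pos hm) (sub_pos.2 hᾱ1a)) (by positivity)
  · rw [hμ2μ1, hK2]
    exact lt_add_of_pos_right _ (div_pos (div_pos hK0pos ha) hD)
  · calc μ2 < (1 - p) * K3 / (D * (1 - p)) :=
          hμ2 ▸ div_lt_div_of_pos_right (by linarith) (by positivity)
      _ = μ3 := by rw [hμ3]; field_simp
  · rw [hμ3, div_le_one hD, hK3, div_le_iff₀ hn, hK0]
    linarith

theorem stmt_1 (α1n α1a α2 b1 b2 D p : ℝ)
    (h1 : α1a > α2) (h2 : α2 ≥ α1n) (h3 : α1n > 0)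
    (h4 : b2 ≥ b1) (h5 : b1 ≥ 0) (h6 : D > (b2 - b1) / α1n)
    (hp : p ∈ Set.Ioo (0:ℝ) 1)
    (ᾱ1 K0 K1 K2 K3 μ1 μ2 μ3 : ℝ)
    (hK0 : K0 = α2 * D - b1 + b2)
    (hᾱ1 : ᾱ1 = (1 - p) * α1n + p * α1a)
    (hK1 : K1 = K0 / (ᾱ1 + α2))
    (hK2 : K2 = K0 / (α1a + α2))
    (hK3 : K3 = K0 / (α1n + α2))
    (hμ1 : μ1 = K1 * (α1a - ᾱ1) / (D * (1 - p) * (α1a + α2)))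
    (hμ2 : μ2 = (K1 - p * K2) / (D * (1 - p)))
    (hμ3 : μ3 = K3 / D) :
    0 < μ1 ∧ μ1 < μ2 ∧ μ2 < μ3 ∧ μ3 ≤ 1 :=
  stmt_1_general α1n α1a α2 b1 b2 D p h1 h2 h3 h4 h6 hp ᾱ1 K0 K1 K2 K3 μ1 μ2 μ3 hK0 hᾱ1 hK1 hK2 hK3
    hμ1 hμ2 hμ3
end

section
/- Under the assumptions α1a > α2 ≥ α1n > 0, b2 ≥ b1 ≥ 0, D > (b2-b1)/α1n, p ∈ (0,1), η^H = 1, and 0 ≤ μ < μ1 (with μ1 = K1·(α1a - ᾱ1)/(D·(1-p)·(α1a+α2)), K1 = (α2·D-b1+b2)/(ᾱ1+α2), ᾱ1 = (1-p)α1n + p·α1a), the uninformed population's equilibrium split fraction ρ^L = K1/((1-μ)·D) - (1-p)·μ/(1-μ) satisfies 0 < ρ^L < 1. -/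
/-!
Write `s = α1n + α2 < t = α1a + α2`. Clearing denominators, `K1 (ᾱ1 + α2) = α2 D - b1 + b2`,
and `ᾱ1 + α2 = (1 - p) s + p t`, so the bound `D > (b2 - b1)/α1n` becomes
`K1 ((1 - p) s + p t) < s D`; since `α1a - ᾱ1 = (1 - p)(t - s)`, the bound `μ < μ1` becomes
`μ D t < K1 (t - s)`. With `m = μ D`, the split is `ρ^L = (K1 - (1 - p) m)/(D - m)`.
Its numerator is positive because `m < K1`, and it is below one because `K1 + p m < D`:
the second bound gives `(K1 + p m) t ≤ K1 (t + p (t - s))`, and the first one, multiplied by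
`t + p (t - s)`, closes the gap because `s (t + p (t - s)) ≤ ((1 - p) s + p t) t`.
-/

open Set

lemma add_mul_lt_of_mul_lt_mul_sub {s t p K D m : ℝ} (hs : 0 < s) (hst : s < t)
    (hp : 0 ≤ p) (hD : 0 < D) (hK : K * ((1 - p) * s + p * t) < s * D)
    (hm : m * t < K * (t - s)) : K + p * m < D := by
  have hu : 0 < (1 - p) * s + p * t := by nlinarith
  have ht : 0 < t := hs.trans hst
  have hw : 0 < t + p * (t - s) := by nlinarith
  have hcomb : (K + p * m) * t ≤ K * (t + p * (t - s)) := by nlinarith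
  have hweights : s * (t + p * (t - s)) ≤ ((1 - p) * s + p * t) * t := by
    nlinarith [mul_nonneg hp (sq_nonneg (t - s))]
  have key : (K + p * m) * (t * ((1 - p) * s + p * t)) < D * (t * ((1 - p) * s + p * t)) :=
    calc (K + p * m) * (t * ((1 - p) * s + p * t))
        = (K + p * m) * t * ((1 - p) * s + p * t) := by ring
      _ ≤ K * (t + p * (t - s)) * ((1 - p) * s + p * t) := by gcongr
      _ = K * ((1 - p) * s + p * t) * (t + p * (t - s)) := by ring
      _ < s * D * (t + p * (t - s)) := by gcongr
      _ = D * (s * (t + p * (t - s))) := by ring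
      _ ≤ D * (((1 - p) * s + p * t) * t) := by gcongr
      _ = D * (t * ((1 - p) * s + p * t)) := by ring
  exact lt_of_mul_lt_mul_right key (mul_pos ht hu).le

lemma split_mem_Ioo_of_bounds {s t p K D μ : ℝ} (hs : 0 < s) (hst : s < t)
    (hp : p ∈ Ioo (0 : ℝ) 1) (hK0 : 0 < K) (hK : K * ((1 - p) * s + p * t) < s * D)
    (hμ : 0 ≤ μ) (hμK : μ * D * t < K * (t - s)) :
    K / ((1 - μ) * D) - (1 - p) * μ / (1 - μ) ∈ Ioo 0 1 := by
  obtain ⟨hp0, hp1⟩ := hp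
  have ht : 0 < t := hs.trans hst
  have hu : s < (1 - p) * s + p * t := by nlinarith
  have hD : 0 < D := pos_of_mul_pos_right ((mul_pos hK0 (hs.trans hu)).trans hK) hs.le
  have hmK : μ * D < K := lt_of_mul_lt_mul_right (by nlinarith) ht.le
  have hKD : K < D := lt_of_mul_lt_mul_left (by nlinarith) (hs.trans hu).le
  have hsum : K + p * (μ * D) < D :=
    add_mul_lt_of_mul_lt_mul_sub hs hst hp0.le hD hK hμK
  have hμ1 : 1 - μ ≠ 0 := by nlinarith
  have hform : K / ((1 - μ) * D) - (1 - p) * μ / (1 - μ)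
      = (K - (1 - p) * (μ * D)) / (D - μ * D) := by
    rw [show D - μ * D = (1 - μ) * D by ring]
    field_simp
  rw [hform, mem_Ioo, div_pos_iff_of_pos_right (by linarith), div_lt_one (by linarith)]
  constructor <;> nlinarith [mul_nonneg hμ hD.le]

theorem stmt_7_general (α1n α1a α2 b1 b2 D p μ : ℝ)
    (h1 : α1a > α2) (h2 : α2 ≥ α1n) (h3 : α1n > 0)
    (h4 : b2 ≥ b1) (h6 : D > (b2 - b1) / α1n)
    (hp : p ∈ Set.Ioo (0:ℝ) 1)
    (ᾱ1 K1 μ1 ρL : ℝ)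
    (hᾱ1 : ᾱ1 = (1 - p) * α1n + p * α1a)
    (hK1 : K1 = (α2 * D - b1 + b2) / (ᾱ1 + α2))
    (hμ1 : μ1 = K1 * (α1a - ᾱ1) / (D * (1 - p) * (α1a + α2)))
    (hμ : 0 ≤ μ) (hμ' : μ < μ1)
    (hρL : ρL = K1 / ((1 - μ) * D) - (1 - p) * μ / (1 - μ)) :
    0 < ρL ∧ ρL < 1 := by
  obtain ⟨hp0, hp1⟩ := hp
  have hbb : b2 - b1 < D * α1n := (div_lt_iff₀ h3).mp h6
  have hD : 0 < D := lt_of_le_of_lt (div_nonneg (by linarith) h3.le) h6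
  have hweights : ᾱ1 + α2 = (1 - p) * (α1n + α2) + p * (α1a + α2) := by rw [hᾱ1]; ring
  have hden : 0 < ᾱ1 + α2 := by rw [hweights]; nlinarith
  have hK1eq : K1 * (ᾱ1 + α2) = α2 * D - b1 + b2 := by rw [hK1]; field_simp
  have hK1pos : 0 < K1 := hK1 ▸ div_pos (by nlinarith) hden
  have hK : K1 * ((1 - p) * (α1n + α2) + p * (α1a + α2)) < (α1n + α2) * D := by
    rw [← hweights, hK1eq]; linarith
  have hμ1' : μ1 = K1 * ((α1a + α2) - (α1n + α2)) / (D * (α1a + α2)) := by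
    rw [hμ1, hᾱ1]
    field_simp
    ring
  have hμK : μ * D * (α1a + α2) < K1 * ((α1a + α2) - (α1n + α2)) := by
    rw [mul_assoc]
    exact (lt_div_iff₀ (mul_pos hD (by linarith))).mp (hμ1' ▸ hμ')
  exact hρL ▸ split_mem_Ioo_of_bounds (by linarith) (by linarith) ⟨hp0, hp1⟩ hK1pos hK hμ hμK

theorem stmt_7 (α1n α1a α2 b1 b2 D p μ : ℝ)
    (h1 : α1a > α2) (h2 : α2 ≥ α1n) (h3 : α1n > 0)
    (h4 : b2 ≥ b1) (h5 : b1 ≥ 0) (h6 : D > (b2 - b1) / α1n)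
    (hp : p ∈ Set.Ioo (0:ℝ) 1)
    (ᾱ1 K1 μ1 ρL : ℝ)
    (hᾱ1 : ᾱ1 = (1 - p) * α1n + p * α1a)
    (hK1 : K1 = (α2 * D - b1 + b2) / (ᾱ1 + α2))
    (hμ1 : μ1 = K1 * (α1a - ᾱ1) / (D * (1 - p) * (α1a + α2)))
    (hμ : 0 ≤ μ) (hμ' : μ < μ1)
    (hρL : ρL = K1 / ((1 - μ) * D) - (1 - p) * μ / (1 - μ)) :
    0 < ρL ∧ ρL < 1 :=
  stmt_7_general α1n α1a α2 b1 b2 D p μ h1 h2 h3 h4 h6 hp ᾱ1 K1 μ1 ρL hᾱ1 hK1 hμ1 hμ hμ' hρL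
end

section
/- Under assumptions α1a > α2 ≥ α1n > 0, b2 ≥ b1 ≥ 0, D > (b2-b1)/α1n, p ∈ (0,1), η^H = 1, and μ3 ≤ μ ≤ 1 with μ3 = K3/D, the loads q1^{Hn} = K3 and q1^{Ha} = K2 satisfy 0 ≤ q1^{Hn} ≤ μ·D, 0 ≤ q1^{Ha} ≤ μ·D, and (1-p)·q1^{Hn} + p·q1^{Ha} > K1, where K1 = K0/(ᾱ1+α2), K2 = K0/(α1a+α2), K3 = K0/(α1n+α2), K0 = α2·D - b1 + b2, ᾱ1 = (1-p)·α1n + p·α1a. -/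
/-! Feasibility of both loads reduces to `K2 ≤ K3 ≤ μ D`, since `K0 > 0`. The Wardrop
inequality is Jensen's inequality for the strictly convex map `x ↦ K0 / x` at the two
distinct points `α1n + α2` and `α1a + α2`, whose `p`-weighted mean is `ᾱ1 + α2`. -/

open Set

theorem inv_convexComb_lt {a b p : ℝ} (ha : 0 < a) (hb : 0 < b) (hab : a ≠ b)
    (hp : p ∈ Ioo (0 : ℝ) 1) :
    ((1 - p) * a + p * b)⁻¹ < (1 - p) * a⁻¹ + p * b⁻¹ := by
  have h := (strictConvexOn_zpow (m := -1) (by decide) (by decide)).2 ha hb hab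
    (sub_pos.2 hp.2) hp.1 (sub_add_cancel 1 p)
  simpa only [smul_eq_mul, zpow_neg_one] using h

theorem div_convexComb_lt {K a b p : ℝ} (hK : 0 < K) (ha : 0 < a) (hb : 0 < b) (hab : a ≠ b)
    (hp : p ∈ Ioo (0 : ℝ) 1) :
    K / ((1 - p) * a + p * b) < (1 - p) * (K / a) + p * (K / b) := by
  have h := mul_lt_mul_of_pos_left (inv_convexComb_lt ha hb hab hp) hK
  simpa only [div_eq_mul_inv, mul_add, mul_left_comm K] using h

theorem stmt_9_general (α1n α1a α2 b1 b2 D p μ : ℝ)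
    (h1 : α1a > α2) (h2 : α2 ≥ α1n) (h3 : α1n > 0)
    (h4 : b2 ≥ b1) (h6 : D > (b2 - b1) / α1n)
    (hp : p ∈ Set.Ioo (0:ℝ) 1)
    (ᾱ1 K0 K1 K2 K3 μ3 q1Hn q1Ha : ℝ)
    (hK0 : K0 = α2 * D - b1 + b2)
    (hᾱ1 : ᾱ1 = (1 - p) * α1n + p * α1a)
    (hK1 : K1 = K0 / (ᾱ1 + α2))
    (hK2 : K2 = K0 / (α1a + α2))
    (hK3 : K3 = K0 / (α1n + α2))
    (hμ3 : μ3 = K3 / D)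
    (hμl : μ3 ≤ μ)
    (hq1Hn : q1Hn = K3) (hq1Ha : q1Ha = K2) :
    (0 ≤ q1Hn ∧ q1Hn ≤ μ * D) ∧ (0 ≤ q1Ha ∧ q1Ha ≤ μ * D) ∧
      (1 - p) * q1Hn + p * q1Ha > K1 := by
  subst hq1Hn hq1Ha hK1 hK2 hK3 hμ3 hᾱ1
  have hα2 : 0 < α2 := h3.trans_le h2
  have hD : 0 < D := (div_nonneg (sub_nonneg.2 h4) h3.le).trans_lt h6
  have hK0pos : 0 < K0 := by rw [hK0]; linarith [mul_pos hα2 hD]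
  have hn : 0 < α1n + α2 := by positivity
  have ha : 0 < α1a + α2 := by linarith
  have hK2_le_K3 : K0 / (α1a + α2) ≤ K0 / (α1n + α2) :=
    div_le_div_of_nonneg_left hK0pos.le hn (by linarith)
  have hK3_le : K0 / (α1n + α2) ≤ μ * D := (div_le_iff₀ hD).1 hμl
  refine ⟨⟨by positivity, hK3_le⟩, ⟨by positivity, hK2_le_K3.trans hK3_le⟩, ?_⟩
  have hmean : (1 - p) * α1n + p * α1a + α2 = (1 - p) * (α1n + α2) + p * (α1a + α2) := by ring
  rw [hmean]
  exact div_convexComb_lt hK0pos hn ha (by linarith) hp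

theorem stmt_9 (α1n α1a α2 b1 b2 D p μ : ℝ)
    (h1 : α1a > α2) (h2 : α2 ≥ α1n) (h3 : α1n > 0)
    (h4 : b2 ≥ b1) (h5 : b1 ≥ 0) (h6 : D > (b2 - b1) / α1n)
    (hp : p ∈ Set.Ioo (0:ℝ) 1)
    (ᾱ1 K0 K1 K2 K3 μ3 q1Hn q1Ha : ℝ)
    (hK0 : K0 = α2 * D - b1 + b2)
    (hᾱ1 : ᾱ1 = (1 - p) * α1n + p * α1a)
    (hK1 : K1 = K0 / (ᾱ1 + α2))
    (hK2 : K2 = K0 / (α1a + α2))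
    (hK3 : K3 = K0 / (α1n + α2))
    (hμ3 : μ3 = K3 / D)
    (hμl : μ3 ≤ μ) (hμu : μ ≤ 1)
    (hq1Hn : q1Hn = K3) (hq1Ha : q1Ha = K2) :
    (0 ≤ q1Hn ∧ q1Hn ≤ μ * D) ∧ (0 ≤ q1Ha ∧ q1Ha ≤ μ * D) ∧
      (1 - p) * q1Hn + p * q1Ha > K1 :=
  stmt_9_general α1n α1a α2 b1 b2 D p μ h1 h2 h3 h4 h6 hp ᾱ1 K0 K1 K2 K3 μ3 q1Hn q1Ha hK0 hᾱ1 hK1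
    hK2 hK3 hμ3 hμl hq1Hn hq1Ha
end

section
/- Under assumptions α1a > α2 ≥ α1n > 0, b2 ≥ b1 ≥ 0, D > (b2-b1)/α1n, p ∈ (0,1), η^H = 1, and μ3 ≤ μ ≤ 1 with μ3 = K3/D, in the regime-R4 equilibrium the realized cost of every player is the same in each state: in the normal state α1n·K3 + b1 = α2·(D - K3) + b2, and in the incident state α1a·K2 + b1 = α2·(D - K2) + b2; consequently, the relative individual value of information is zero. -/
theorem affine_costs_eq_of_eq_div {a c b₁ b₂ D K : ℝ} (h : a + c ≠ 0)
    (hK : K = (c * D - b₁ + b₂) / (a + c)) :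
    a * K + b₁ = c * (D - K) + b₂ := by
  subst hK
  field_simp
  ring

theorem stmt_13_general (α1n α1a α2 b1 b2 D : ℝ)
    (h1 : α1a > α2) (h2 : α2 ≥ α1n) (h3 : α1n > 0)
    (K2 K3 : ℝ)
    (hK2 : K2 = (α2 * D - b1 + b2) / (α1a + α2))
    (hK3 : K3 = (α2 * D - b1 + b2) / (α1n + α2)) :
    α1n * K3 + b1 = α2 * (D - K3) + b2 ∧
      α1a * K2 + b1 = α2 * (D - K2) + b2 := by
  have hα2 : 0 < α2 := h3.trans_le h2
  exact ⟨affine_costs_eq_of_eq_div (by positivity) hK3,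
    affine_costs_eq_of_eq_div (by linarith) hK2⟩

theorem stmt_13 (α1n α1a α2 b1 b2 D p μ : ℝ)
    (h1 : α1a > α2) (h2 : α2 ≥ α1n) (h3 : α1n > 0)
    (h4 : b2 ≥ b1) (h5 : b1 ≥ 0) (h6 : D > (b2 - b1) / α1n)
    (hp : p ∈ Set.Ioo (0:ℝ) 1)
    (K2 K3 μ3 : ℝ)
    (hK2 : K2 = (α2 * D - b1 + b2) / (α1a + α2))
    (hK3 : K3 = (α2 * D - b1 + b2) / (α1n + α2))
    (hμ3 : μ3 = K3 / D)
    (hμl : μ3 ≤ μ) (hμu : μ ≤ 1) :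
    α1n * K3 + b1 = α2 * (D - K3) + b2 ∧
      α1a * K2 + b1 = α2 * (D - K2) + b2 :=
  stmt_13_general α1n α1a α2 b1 b2 D h1 h2 h3 K2 K3 hK2 hK3
end

section
/- Under assumptions α1a > α2 ≥ α1n > 0, b2 ≥ b1 ≥ 0, D > (b2-b1)/α1n, and p ∈ (0,1), define the regime-R1 expected social cost as the quadratic C̄(μ) = A·μ² + B·μ + C with A = D·p·(1-p)·(α1a + α1n + α2 - ᾱ1) and B = K1·((1-p)·α1n + (2p-1)·ᾱ1 - p·α1a), where ᾱ1 = (1-p)·α1n + p·α1a and K1 = (α2·D - b1 + b2)/(ᾱ1+α2). Then A > 0 and the vertex μ̂ = -B/(2A) satisfies μ̂ ≥ μ1, where μ1 = K1·(α1a - ᾱ1)/(D·(1-p)·(α1a+α2)); hence C̄ is nonincreasing on [0, μ1]. -/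
/-!
Writing `ᾱ₁ = (1 - p) α₁ₙ + p α₁ₐ`, both the linear coefficient `B` and `α₁ₐ - ᾱ₁` carry the
factor `α₁ₐ - α₁ₙ`, and after cancelling the common factors
`μ̂ = K₁ (α₁ₐ - α₁ₙ) / (D (p α₁ₙ + (1 - p) α₁ₐ + α₂))` and `μ₁ = K₁ (α₁ₐ - α₁ₙ) / (D (α₁ₐ + α₂))`.
The two numerators agree and `p α₁ₙ + (1 - p) α₁ₐ ≤ α₁ₐ` because `α₁ₙ ≤ α₁ₐ`, so `μ₁ ≤ μ̂`;
a convex quadratic is antitone left of its vertex.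
-/

lemma quadratic_antitoneOn_Iic_vertex {A B C : ℝ} (hA : 0 < A) :
    AntitoneOn (fun x => A * x ^ 2 + B * x + C) (Set.Iic (-B / (2 * A))) := by
  intro x hx y hy hxy
  have hx' : 2 * A * x ≤ -B := (le_div_iff₀' (by positivity)).1 hx
  have hy' : 2 * A * y ≤ -B := (le_div_iff₀' (by positivity)).1 hy
  -- `f x - f y = (y - x) * (-(A * (x + y) + B))`
  nlinarith [mul_nonneg (sub_nonneg.2 hxy) (show 0 ≤ -(A * (x + y) + B) by linarith)]

section RegimeR1

variable {α1n α1a α2 p : ℝ}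

lemma regimeR1_quadraticCoeff_eq :
    α1a + α1n + α2 - ((1 - p) * α1n + p * α1a) = p * α1n + (1 - p) * α1a + α2 := by
  ring

lemma regimeR1_linearCoeff_eq :
    (1 - p) * α1n + (2 * p - 1) * ((1 - p) * α1n + p * α1a) - p * α1a =
      -(2 * p * (1 - p) * (α1a - α1n)) := by
  ring

lemma regimeR1_vertex_eq (D K : ℝ) (hp : p ≠ 0) (hq : 1 - p ≠ 0) :
    -(K * ((1 - p) * α1n + (2 * p - 1) * ((1 - p) * α1n + p * α1a) - p * α1a)) /
        (2 * (D * p * (1 - p) * (α1a + α1n + α2 - ((1 - p) * α1n + p * α1a)))) =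
      K * (α1a - α1n) / (D * (p * α1n + (1 - p) * α1a + α2)) := by
  rw [regimeR1_linearCoeff_eq, regimeR1_quadraticCoeff_eq]
  conv_rhs => rw [← mul_div_mul_left _ _ (by positivity : 2 * p * (1 - p) ≠ 0)]
  congr 1 <;> ring

lemma regimeR1_threshold_eq (D K : ℝ) (hq : 1 - p ≠ 0) :
    K * (α1a - ((1 - p) * α1n + p * α1a)) / (D * (1 - p) * (α1a + α2)) =
      K * (α1a - α1n) / (D * (α1a + α2)) := by
  conv_rhs => rw [← mul_div_mul_left _ _ hq]
  congr 1 <;> ring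

end RegimeR1

theorem stmt_14_general (α1n α1a α2 b1 b2 D p : ℝ)
    (h1 : α1a > α2) (h2 : α2 ≥ α1n) (h3 : α1n > 0)
    (h4 : b2 ≥ b1) (h6 : D > (b2 - b1) / α1n)
    (hp : p ∈ Set.Ioo (0:ℝ) 1)
    (ᾱ1 K1 A B μ1 C : ℝ)
    (hᾱ1 : ᾱ1 = (1 - p) * α1n + p * α1a)
    (hK1 : K1 = (α2 * D - b1 + b2) / (ᾱ1 + α2))
    (hA : A = D * p * (1 - p) * (α1a + α1n + α2 - ᾱ1))
    (hB : B = K1 * ((1 - p) * α1n + (2 * p - 1) * ᾱ1 - p * α1a))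
    (hμ1 : μ1 = K1 * (α1a - ᾱ1) / (D * (1 - p) * (α1a + α2)))
    (Cbar : ℝ → ℝ)
    (hCbar : ∀ μ, Cbar μ = A * μ ^ 2 + B * μ + C) :
    0 < A ∧ μ1 ≤ -B / (2 * A) ∧
      ∀ x y, 0 ≤ x → x ≤ y → y ≤ μ1 → Cbar y ≤ Cbar x := by
  obtain ⟨hp0, hp1⟩ := hp
  have hq : 0 < 1 - p := sub_pos.2 hp1
  have hα2 : 0 < α2 := h3.trans_le h2
  have hα1a : 0 < α1a := hα2.trans h1
  have hα1n_le : α1n ≤ α1a := h2.trans h1.le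
  have hD : 0 < D := (div_nonneg (sub_nonneg.2 h4) h3.le).trans_lt h6
  have hᾱ1_pos : 0 < ᾱ1 := by rw [hᾱ1]; positivity
  have hK1_nonneg : 0 ≤ K1 := by
    rw [hK1]
    exact div_nonneg (by nlinarith) (by positivity)
  have hApos : 0 < A := by
    rw [hA, hᾱ1, regimeR1_quadraticCoeff_eq]
    positivity
  have hμ1_le : μ1 ≤ -B / (2 * A) := by
    rw [hμ1, hB, hA, hᾱ1, regimeR1_threshold_eq D K1 hq.ne',
      regimeR1_vertex_eq D K1 hp0.ne' hq.ne']
    refine div_le_div_of_nonneg_left (mul_nonneg hK1_nonneg (sub_nonneg.2 hα1n_le)) (by positivity) ?_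
    gcongr
    nlinarith
  refine ⟨hApos, hμ1_le, fun x y _ hxy hy => ?_⟩
  rw [hCbar, hCbar]
  exact quadratic_antitoneOn_Iic_vertex hApos (Set.mem_Iic.2 ((hxy.trans hy).trans hμ1_le))
    (Set.mem_Iic.2 (hy.trans hμ1_le)) hxy

theorem stmt_14 (α1n α1a α2 b1 b2 D p : ℝ)
    (h1 : α1a > α2) (h2 : α2 ≥ α1n) (h3 : α1n > 0)
    (h4 : b2 ≥ b1) (h5 : b1 ≥ 0) (h6 : D > (b2 - b1) / α1n)
    (hp : p ∈ Set.Ioo (0:ℝ) 1)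
    (ᾱ1 K1 A B μ1 C : ℝ)
    (hᾱ1 : ᾱ1 = (1 - p) * α1n + p * α1a)
    (hK1 : K1 = (α2 * D - b1 + b2) / (ᾱ1 + α2))
    (hA : A = D * p * (1 - p) * (α1a + α1n + α2 - ᾱ1))
    (hB : B = K1 * ((1 - p) * α1n + (2 * p - 1) * ᾱ1 - p * α1a))
    (hμ1 : μ1 = K1 * (α1a - ᾱ1) / (D * (1 - p) * (α1a + α2)))
    (Cbar : ℝ → ℝ)
    (hCbar : ∀ μ, Cbar μ = A * μ ^ 2 + B * μ + C) :
    0 < A ∧ μ1 ≤ -B / (2 * A) ∧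
      ∀ x y, 0 ≤ x → x ≤ y → y ≤ μ1 → Cbar y ≤ Cbar x :=
  stmt_14_general α1n α1a α2 b1 b2 D p h1 h2 h3 h4 h6 hp ᾱ1 K1 A B μ1 C hᾱ1 hK1 hA hB hμ1 Cbar hCbar
end
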